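/- For the GOY shell model bilinear operator B there exists C > 0 such that ‖B(u,v)‖_V ≤ C ‖u‖_V ‖v‖_V for all u, v ∈ V, and |B(u,v)|_H ≤ C ‖u‖_{H^{1/4}} ‖v‖_{H^{1/4}} for all u, v in H^{1/4} = {u : Σ k_n |u_n|² < ∞}. -/

import Mathlib

open Complex

/-- The wavenumbers k_n = k₀ · 2ⁿ. -/
noncomputable def kk (k₀ : ℝ) (n : ℕ) : ℝ := k₀ * 2 ^ n

/-- The GOY shell model bilinear operator.  Sequences are indexed by ℕ, with the
convention that the 0-th entry (and, via truncated subtraction, the entries with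
negative index) vanish. -/
noncomputable def shellB (k₀ a b : ℝ) (u v : ℕ → ℂ) : ℕ → ℂ := fun n =>
  if n = 0 then 0 else
    Complex.I * (((a * kk k₀ (n + 1) : ℝ) : ℂ) * (starRingEnd ℂ) (u (n + 1)) *
        (starRingEnd ℂ) (v (n + 2))
      + ((b * kk k₀ n : ℝ) : ℂ) * (starRingEnd ℂ) (u (n - 1)) * (starRingEnd ℂ) (v (n + 1))
      - ((a * kk k₀ (n - 1) : ℝ) : ℂ) * (starRingEnd ℂ) (u (n - 1)) *
        (starRingEnd ℂ) (v (n - 2))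
      - ((b * kk k₀ (n - 1) : ℝ) : ℂ) * (starRingEnd ℂ) (u (n - 2)) *
        (starRingEnd ℂ) (v (n - 1)))

lemma kk_pos {k₀ : ℝ} (hk : 0 < k₀) (n : ℕ) : 0 < kk k₀ n := by
  unfold kk; positivity

lemma kk_succ (k₀ : ℝ) (n : ℕ) : kk k₀ (n+1) = 2 * kk k₀ n := by
  unfold kk; ring

lemma kk_mono {k₀ : ℝ} (hk : 0 < k₀) {n m : ℕ} (h : n ≤ m) : kk k₀ n ≤ kk k₀ m := by
  unfold kk
  exact mul_le_mul_of_nonneg_left (by gcongr <;> norm_num) hk.le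

lemma kk_le_two_pred {k₀ : ℝ} (hk : 0 < k₀) (m : ℕ) : kk k₀ m ≤ 2 * kk k₀ (m-1) := by
  cases m with
  | zero => simp; nlinarith [kk_pos hk 0]
  | succ j => simp [kk_succ]

lemma kk_succ_le_four_pred {k₀ : ℝ} (hk : 0 < k₀) (m : ℕ) :
    kk k₀ (m+1) ≤ 4 * kk k₀ (m-1) := by
  cases m with
  | zero => simp [kk_succ]; nlinarith [kk_pos hk 0]
  | succ j => simp only [Nat.add_sub_cancel, kk_succ]; nlinarith [kk_pos hk j]

lemma kk_sq (k₀ : ℝ) (m : ℕ) : kk k₀ m * kk k₀ (m+2) = kk k₀ (m+1) ^ 2 := by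
  unfold kk; ring

lemma sqrt_kk_le_two_pred {k₀ : ℝ} (hk : 0 < k₀) (m : ℕ) :
    Real.sqrt (kk k₀ m) ≤ 2 * Real.sqrt (kk k₀ (m-1)) := by
  have h1 : kk k₀ m ≤ 4 * kk k₀ (m-1) :=
    le_trans (kk_le_two_pred hk m) (by nlinarith [kk_pos hk (m-1)])
  calc Real.sqrt (kk k₀ m) ≤ Real.sqrt (4 * kk k₀ (m-1)) := Real.sqrt_le_sqrt h1
    _ = 2 * Real.sqrt (kk k₀ (m-1)) := by
        rw [show (4:ℝ) = 2^2 by norm_num, Real.sqrt_mul (by positivity),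
          Real.sqrt_sq (by norm_num)]

/-- a pointwise bound on the norm of shellB -/
lemma shellB_norm_le (k₀ a b : ℝ) (hk : 0 < k₀) (u v : ℕ → ℂ) (n : ℕ) :
    ‖shellB k₀ a b u v n‖ ≤
      |a| * kk k₀ (n+1) * ‖u (n+1)‖ * ‖v (n+2)‖
      + |b| * kk k₀ n * ‖u (n-1)‖ * ‖v (n+1)‖
      + |a| * kk k₀ (n-1) * ‖u (n-1)‖ * ‖v (n-2)‖
      + |b| * kk k₀ (n-1) * ‖u (n-2)‖ * ‖v (n-1)‖ := by
  unfold shellB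
  by_cases h : n = 0
  · subst h; rw [if_pos rfl, norm_zero]
    have t : ∀ (c : ℝ) (m : ℕ) (x y : ℝ), 0 ≤ x → 0 ≤ y → 0 ≤ |c| * kk k₀ m * x * y :=
      fun c m x y hx hy => mul_nonneg (mul_nonneg (mul_nonneg (abs_nonneg _)
        (kk_pos hk m).le) hx) hy
    have t1 := t a (0+1) _ _ (norm_nonneg (u (0+1))) (norm_nonneg (v (0+2)))
    have t2 := t b 0 _ _ (norm_nonneg (u (0-1))) (norm_nonneg (v (0+1)))
    have t3 := t a (0-1) _ _ (norm_nonneg (u (0-1))) (norm_nonneg (v (0-2)))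
    have t4 := t b (0-1) _ _ (norm_nonneg (u (0-2))) (norm_nonneg (v (0-1)))
    linarith
  · rw [if_neg h, norm_mul, Complex.norm_I, one_mul]
    have key : ∀ t1 t2 t3 t4 : ℂ, ‖t1 + t2 - t3 - t4‖ ≤ ‖t1‖ + ‖t2‖ + ‖t3‖ + ‖t4‖ := by
      intro t1 t2 t3 t4
      calc ‖t1 + t2 - t3 - t4‖ ≤ ‖t1 + t2 - t3‖ + ‖t4‖ := norm_sub_le _ _
        _ ≤ ‖t1 + t2‖ + ‖t3‖ + ‖t4‖ := by gcongr; exact norm_sub_le _ _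
        _ ≤ ‖t1‖ + ‖t2‖ + ‖t3‖ + ‖t4‖ := by gcongr; exact norm_add_le _ _
    refine le_trans (key _ _ _ _) (le_of_eq ?_)
    simp only [norm_mul, Complex.norm_real, Real.norm_eq_abs, abs_mul,
      abs_of_pos (kk_pos hk _), RCLike.norm_conj]

lemma sq_sum_le (x y z w : ℝ) : (x+y+z+w)^2 ≤ 4*(x^2+y^2+z^2+w^2) := by
  nlinarith [sq_nonneg (x-y), sq_nonneg (x-z), sq_nonneg (x-w), sq_nonneg (y-z),
    sq_nonneg (y-w), sq_nonneg (z-w)]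

lemma le_sqrt_tsum {f : ℕ → ℝ} (hf : ∀ n, 0 ≤ f n) (hs : Summable (fun n => f n ^ 2))
    (m : ℕ) : f m ≤ Real.sqrt (∑' n, f n ^ 2) := by
  have h1 : f m ^ 2 ≤ ∑' n, f n ^ 2 := Summable.le_tsum hs m (fun i _ => sq_nonneg _)
  have := Real.sqrt_le_sqrt h1
  rwa [Real.sqrt_sq (hf m)] at this

set_option maxHeartbeats 1000000 in
lemma core {M : ℝ} (hM : 0 ≤ M) {F G : ℕ → ℝ}
    (hF : ∀ n, 0 ≤ F n) (hG : ∀ n, 0 ≤ G n)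
    (hGs : Summable (fun n => G n ^ 2))
    (hb : ∀ n, F n ≤ M * (G (n+2) + G (n+1) + G (n-2) + G (n-1))) :
    Summable (fun n => F n ^ 2) ∧
      Real.sqrt (∑' n, F n ^ 2) ≤ 6 * M * Real.sqrt (∑' n, G n ^ 2) := by
  set S := ∑' n, G n ^ 2 with hS
  have hS0 : 0 ≤ S := tsum_nonneg (fun n => sq_nonneg _)
  -- summability of the shifted sequences
  have hs2 : Summable (fun n => G (n+2) ^ 2) := (summable_nat_add_iff 2).mpr hGs
  have hs1 : Summable (fun n => G (n+1) ^ 2) := (summable_nat_add_iff 1).mpr hGs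
  have hm2 : Summable (fun n => G (n-2) ^ 2) := by
    apply (summable_nat_add_iff 2).mp
    simpa using hGs
  have hm1 : Summable (fun n => G (n-1) ^ 2) := by
    apply (summable_nat_add_iff 1).mp
    simpa using hGs
  -- pointwise bound on F n ^ 2
  have hpt : ∀ n, F n ^ 2 ≤
      4 * M^2 * (G (n+2)^2 + G (n+1)^2 + G (n-2)^2 + G (n-1)^2) := by
    intro n
    have h1 := hb n
    have h2 : F n ^ 2 ≤ (M * (G (n+2) + G (n+1) + G (n-2) + G (n-1)))^2 :=
      pow_le_pow_left₀ (hF n) h1 2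
    calc F n ^ 2 ≤ (M * (G (n+2) + G (n+1) + G (n-2) + G (n-1)))^2 := h2
      _ = M^2 * (G (n+2) + G (n+1) + G (n-2) + G (n-1))^2 := by ring
      _ ≤ M^2 * (4*(G (n+2)^2 + G (n+1)^2 + G (n-2)^2 + G (n-1)^2)) := by
          exact mul_le_mul_of_nonneg_left (sq_sum_le _ _ _ _) (sq_nonneg M)
      _ = 4 * M^2 * (G (n+2)^2 + G (n+1)^2 + G (n-2)^2 + G (n-1)^2) := by ring
  have hHs : Summable (fun n =>
      4 * M^2 * (G (n+2)^2 + G (n+1)^2 + G (n-2)^2 + G (n-1)^2)) :=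
    (((hs2.add hs1).add hm2).add hm1).mul_left _
  have hFs : Summable (fun n => F n ^ 2) :=
    Summable.of_nonneg_of_le (fun n => sq_nonneg _) hpt hHs
  refine ⟨hFs, ?_⟩
  -- bounds on the shifted tsums
  have hG0 : G 0 ^ 2 ≤ S := Summable.le_tsum hGs 0 (fun i _ => sq_nonneg _)
  have ht2 : (∑' n, G (n+2)^2) ≤ S := by
    have := Summable.sum_add_tsum_nat_add (f := fun n => G n ^ 2) 2 hGs
    have hpos : 0 ≤ ∑ i ∈ Finset.range 2, G i ^ 2 :=
      Finset.sum_nonneg (fun i _ => sq_nonneg _)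
    linarith
  have ht1 : (∑' n, G (n+1)^2) ≤ S := by
    have := Summable.sum_add_tsum_nat_add (f := fun n => G n ^ 2) 1 hGs
    have hpos : 0 ≤ ∑ i ∈ Finset.range 1, G i ^ 2 :=
      Finset.sum_nonneg (fun i _ => sq_nonneg _)
    linarith
  have htm2 : (∑' n, G (n-2)^2) ≤ 3 * S := by
    have heq := Summable.sum_add_tsum_nat_add (f := fun n => G (n-2) ^ 2) 2 hm2
    have h1 : (∑' n, G ((n+2)-2)^2) = S := by simp [hS]
    have h2 : (∑ i ∈ Finset.range 2, G (i-2) ^ 2) = 2 * G 0 ^ 2 := by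
      simp [Finset.sum_range_succ]; ring
    rw [h2, h1] at heq
    linarith
  have htm1 : (∑' n, G (n-1)^2) ≤ 2 * S := by
    have heq := Summable.sum_add_tsum_nat_add (f := fun n => G (n-1) ^ 2) 1 hm1
    have h1 : (∑' n, G ((n+1)-1)^2) = S := by simp [hS]
    have h2 : (∑ i ∈ Finset.range 1, G (i-1) ^ 2) = G 0 ^ 2 := by
      simp
    rw [h2, h1] at heq
    linarith
  have htot : (∑' n, F n ^ 2) ≤ 36 * M^2 * S := by
    calc (∑' n, F n ^ 2)
        ≤ ∑' n, 4 * M^2 * (G (n+2)^2 + G (n+1)^2 + G (n-2)^2 + G (n-1)^2) :=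
          Summable.tsum_le_tsum hpt hFs hHs
      _ = 4 * M^2 * ((∑' n, G (n+2)^2) + (∑' n, G (n+1)^2)
            + (∑' n, G (n-2)^2) + (∑' n, G (n-1)^2)) := by
          rw [tsum_mul_left, Summable.tsum_add ((hs2.add hs1).add hm2) hm1,
            Summable.tsum_add (hs2.add hs1) hm2, Summable.tsum_add hs2 hs1]
      _ ≤ 4 * M^2 * (S + S + 3*S + 2*S) := by
          have h4 : (0:ℝ) ≤ 4 * M^2 := by positivity
          exact mul_le_mul_of_nonneg_left (by linarith) h4
      _ ≤ 36 * M^2 * S := by nlinarith [sq_nonneg M]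
  calc Real.sqrt (∑' n, F n ^ 2) ≤ Real.sqrt (36 * M^2 * S) := Real.sqrt_le_sqrt htot
    _ = 6 * M * Real.sqrt S := by
        rw [show (36:ℝ) * M^2 * S = (6*M)^2 * S by ring,
          Real.sqrt_mul (by positivity), Real.sqrt_sq (by positivity)]

lemma prod_step {P nu nv σ ρ c Su : ℝ} (h1 : P ≤ c*(σ*ρ)) (h2 : σ*nu ≤ Su)
    (hnu : 0 ≤ nu) (hnv : 0 ≤ nv) (hρ : 0 ≤ ρ) (hc : 0 ≤ c) :
    P * nu * nv ≤ c * Su * (ρ * nv) := by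
  calc P * nu * nv = P * (nu * nv) := by ring
    _ ≤ (c*(σ*ρ)) * (nu*nv) := mul_le_mul_of_nonneg_right h1 (mul_nonneg hnu hnv)
    _ = (c*ρ*nv) * (σ*nu) := by ring
    _ ≤ (c*ρ*nv) * Su := mul_le_mul_of_nonneg_left h2 (by positivity)
    _ = c * Su * (ρ*nv) := by ring

set_option maxHeartbeats 1000000 in
lemma key {k₀ a b c Su : ℝ} (hk : 0 < k₀) (hc : 0 ≤ c) (hSu : 0 ≤ Su)
    (u v : ℕ → ℂ) (W σ ρ : ℕ → ℝ)
    (hρ : ∀ n, 0 ≤ ρ n)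
    (hsup : ∀ m, σ m * ‖u m‖ ≤ Su)
    (h1 : ∀ m, W (m+1) * kk k₀ (m+2) ≤ c * (σ (m+2) * ρ (m+3)))
    (h2 : ∀ m, W (m+1) * kk k₀ (m+1) ≤ c * (σ m * ρ (m+2)))
    (h3 : ∀ m, W (m+1) * kk k₀ m ≤ c * (σ m * ρ (m-1)))
    (h4 : ∀ m, W (m+1) * kk k₀ m ≤ c * (σ (m-1) * ρ m))
    (hW0 : W 0 = 0 ∨ True) (hWnn : ∀ n, 0 ≤ W n) :
    ∀ n, W n * ‖shellB k₀ a b u v n‖ ≤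
      (c * (|a| + |b| + 1) * Su) *
        ((ρ (n+2) * ‖v (n+2)‖) + (ρ (n+1) * ‖v (n+1)‖)
          + (ρ (n-2) * ‖v (n-2)‖) + (ρ (n-1) * ‖v (n-1)‖)) := by
  intro n
  have habs : (0:ℝ) ≤ |a| := abs_nonneg a
  have hbabs : (0:ℝ) ≤ |b| := abs_nonneg b
  cases n with
  | zero =>
    have : shellB k₀ a b u v 0 = 0 := by simp [shellB]
    rw [this, norm_zero, mul_zero]
    have hX : ∀ m : ℕ, 0 ≤ ρ m * ‖v m‖ := fun m => mul_nonneg (hρ m) (norm_nonneg _)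
    exact mul_nonneg (by positivity)
      (add_nonneg (add_nonneg (add_nonneg (hX _) (hX _)) (hX _)) (hX _))
  | succ m =>
    have hB := shellB_norm_le k₀ a b hk u v (m+1)
    simp only [show m+1+1 = m+2 from rfl, show m+1+2 = m+3 from rfl,
      Nat.succ_sub_succ, Nat.sub_zero, Nat.add_sub_cancel] at hB ⊢
    have hT1 : W (m+1) * (|a| * kk k₀ (m+2) * ‖u (m+2)‖ * ‖v (m+3)‖)
        ≤ |a| * (c * Su * (ρ (m+3) * ‖v (m+3)‖)) := by
      have := prod_step (h1 m) (hsup (m+2)) (norm_nonneg (u (m+2))) (norm_nonneg (v (m+3)))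
        (hρ (m+3)) hc
      calc W (m+1) * (|a| * kk k₀ (m+2) * ‖u (m+2)‖ * ‖v (m+3)‖)
          = |a| * (W (m+1) * kk k₀ (m+2) * ‖u (m+2)‖ * ‖v (m+3)‖) := by ring
        _ ≤ |a| * (c * Su * (ρ (m+3) * ‖v (m+3)‖)) :=
            mul_le_mul_of_nonneg_left this habs
    have hT2 : W (m+1) * (|b| * kk k₀ (m+1) * ‖u m‖ * ‖v (m+2)‖)
        ≤ |b| * (c * Su * (ρ (m+2) * ‖v (m+2)‖)) := by
      have := prod_step (h2 m) (hsup m) (norm_nonneg (u m)) (norm_nonneg (v (m+2)))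
        (hρ (m+2)) hc
      calc W (m+1) * (|b| * kk k₀ (m+1) * ‖u m‖ * ‖v (m+2)‖)
          = |b| * (W (m+1) * kk k₀ (m+1) * ‖u m‖ * ‖v (m+2)‖) := by ring
        _ ≤ |b| * (c * Su * (ρ (m+2) * ‖v (m+2)‖)) :=
            mul_le_mul_of_nonneg_left this hbabs
    have hT3 : W (m+1) * (|a| * kk k₀ m * ‖u m‖ * ‖v (m-1)‖)
        ≤ |a| * (c * Su * (ρ (m-1) * ‖v (m-1)‖)) := by
      have := prod_step (h3 m) (hsup m) (norm_nonneg (u m)) (norm_nonneg (v (m-1)))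
        (hρ (m-1)) hc
      calc W (m+1) * (|a| * kk k₀ m * ‖u m‖ * ‖v (m-1)‖)
          = |a| * (W (m+1) * kk k₀ m * ‖u m‖ * ‖v (m-1)‖) := by ring
        _ ≤ |a| * (c * Su * (ρ (m-1) * ‖v (m-1)‖)) :=
            mul_le_mul_of_nonneg_left this habs
    have hT4 : W (m+1) * (|b| * kk k₀ m * ‖u (m-1)‖ * ‖v m‖)
        ≤ |b| * (c * Su * (ρ m * ‖v m‖)) := by
      have := prod_step (h4 m) (hsup (m-1)) (norm_nonneg (u (m-1))) (norm_nonneg (v m))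
        (hρ m) hc
      calc W (m+1) * (|b| * kk k₀ m * ‖u (m-1)‖ * ‖v m‖)
          = |b| * (W (m+1) * kk k₀ m * ‖u (m-1)‖ * ‖v m‖) := by ring
        _ ≤ |b| * (c * Su * (ρ m * ‖v m‖)) :=
            mul_le_mul_of_nonneg_left this hbabs
    have step1 : W (m+1) * ‖shellB k₀ a b u v (m+1)‖ ≤
        W (m+1) * (|a| * kk k₀ (m+2) * ‖u (m+2)‖ * ‖v (m+3)‖)
        + W (m+1) * (|b| * kk k₀ (m+1) * ‖u m‖ * ‖v (m+2)‖)
        + W (m+1) * (|a| * kk k₀ m * ‖u m‖ * ‖v (m-1)‖)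
        + W (m+1) * (|b| * kk k₀ m * ‖u (m-1)‖ * ‖v m‖) := by
      have := mul_le_mul_of_nonneg_left hB (hWnn (m+1))
      linarith [this]
    have hX1 : (0:ℝ) ≤ c * Su * (ρ (m+3) * ‖v (m+3)‖) := by
      have := hρ (m+3); positivity
    have hX2 : (0:ℝ) ≤ c * Su * (ρ (m+2) * ‖v (m+2)‖) := by
      have := hρ (m+2); positivity
    have hX3 : (0:ℝ) ≤ c * Su * (ρ (m-1) * ‖v (m-1)‖) := by
      have := hρ (m-1); positivity
    have hX4 : (0:ℝ) ≤ c * Su * (ρ m * ‖v m‖) := by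
      have := hρ m; positivity
    have final : |a| * (c * Su * (ρ (m+3) * ‖v (m+3)‖))
        + |b| * (c * Su * (ρ (m+2) * ‖v (m+2)‖))
        + |a| * (c * Su * (ρ (m-1) * ‖v (m-1)‖))
        + |b| * (c * Su * (ρ m * ‖v m‖))
        ≤ (c * (|a| + |b| + 1) * Su) *
            ((ρ (m+3) * ‖v (m+3)‖) + (ρ (m+2) * ‖v (m+2)‖)
              + (ρ (m-1) * ‖v (m-1)‖) + (ρ m * ‖v m‖)) := by
      nlinarith [mul_nonneg habs hX1, mul_nonneg habs hX2, mul_nonneg habs hX3,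
        mul_nonneg habs hX4, mul_nonneg hbabs hX1, mul_nonneg hbabs hX2,
        mul_nonneg hbabs hX3, mul_nonneg hbabs hX4, hX1, hX2, hX3, hX4]
    linarith [step1, hT1, hT2, hT3, hT4, final]

section weights
variable {k₀ : ℝ}

lemma wV1 (hk : 0 < k₀) (m : ℕ) :
    kk k₀ (m+1) * kk k₀ (m+2) ≤ 4 * (kk k₀ (m+2) * kk k₀ (m+3)) := by
  nlinarith [kk_succ k₀ (m+1), kk_succ k₀ (m+2), kk_pos hk (m+1), kk_pos hk (m+2),
    sq_nonneg (kk k₀ (m+1))]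

lemma wV2 (hk : 0 < k₀) (m : ℕ) :
    kk k₀ (m+1) * kk k₀ (m+1) ≤ 4 * (kk k₀ m * kk k₀ (m+2)) := by
  nlinarith [kk_succ k₀ m, kk_succ k₀ (m+1), kk_pos hk m, sq_nonneg (kk k₀ m)]

lemma wV3 (hk : 0 < k₀) (m : ℕ) :
    kk k₀ (m+1) * kk k₀ m ≤ 4 * (kk k₀ m * kk k₀ (m-1)) := by
  nlinarith [kk_succ_le_four_pred hk m, kk_pos hk m, kk_pos hk (m-1)]

lemma wV4 (hk : 0 < k₀) (m : ℕ) :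
    kk k₀ (m+1) * kk k₀ m ≤ 4 * (kk k₀ (m-1) * kk k₀ m) := by
  nlinarith [kk_succ_le_four_pred hk m, kk_pos hk m, kk_pos hk (m-1)]

lemma wH1 (hk : 0 < k₀) (m : ℕ) :
    1 * kk k₀ (m+2) ≤ 4 * (Real.sqrt (kk k₀ (m+2)) * Real.sqrt (kk k₀ (m+3))) := by
  have e : Real.sqrt (kk k₀ (m+2)) * Real.sqrt (kk k₀ (m+2)) = kk k₀ (m+2) :=
    Real.mul_self_sqrt (kk_pos hk (m+2)).le
  have h : Real.sqrt (kk k₀ (m+2)) ≤ Real.sqrt (kk k₀ (m+3)) :=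
    Real.sqrt_le_sqrt (kk_mono hk (by omega))
  nlinarith [Real.sqrt_nonneg (kk k₀ (m+2)), Real.sqrt_nonneg (kk k₀ (m+3))]

lemma wH2 (hk : 0 < k₀) (m : ℕ) :
    1 * kk k₀ (m+1) ≤ 4 * (Real.sqrt (kk k₀ m) * Real.sqrt (kk k₀ (m+2))) := by
  have e : Real.sqrt (kk k₀ m) * Real.sqrt (kk k₀ (m+2)) = kk k₀ (m+1) := by
    rw [← Real.sqrt_mul (kk_pos hk m).le, kk_sq, Real.sqrt_sq (kk_pos hk (m+1)).le]
  rw [e]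
  nlinarith [kk_pos hk (m+1)]

lemma wH3 (hk : 0 < k₀) (m : ℕ) :
    1 * kk k₀ m ≤ 4 * (Real.sqrt (kk k₀ m) * Real.sqrt (kk k₀ (m-1))) := by
  have e : Real.sqrt (kk k₀ m) * Real.sqrt (kk k₀ m) = kk k₀ m :=
    Real.mul_self_sqrt (kk_pos hk m).le
  have h := sqrt_kk_le_two_pred hk m
  nlinarith [Real.sqrt_nonneg (kk k₀ m), Real.sqrt_nonneg (kk k₀ (m-1))]

lemma wH4 (hk : 0 < k₀) (m : ℕ) :
    1 * kk k₀ m ≤ 4 * (Real.sqrt (kk k₀ (m-1)) * Real.sqrt (kk k₀ m)) := by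
  have := wH3 hk m
  nlinarith [this]

end weights

set_option maxHeartbeats 1000000 in
/-- There is C > 0 with ‖B(u,v)‖_V ≤ C‖u‖_V‖v‖_V for u, v ∈ V, and
|B(u,v)|_H ≤ C‖u‖_{H^{1/4}}‖v‖_{H^{1/4}} for u, v ∈ H^{1/4} = {u : Σ kₙ|uₙ|² < ∞}. -/
theorem stmt11 (k₀ a b : ℝ) (hk₀ : 1 < k₀) :
    ∃ C > (0 : ℝ),
      (∀ u v : ℕ → ℂ, u 0 = 0 → v 0 = 0 →
        Summable (fun n => (kk k₀ n) ^ 2 * ‖u n‖ ^ 2) →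
        Summable (fun n => (kk k₀ n) ^ 2 * ‖v n‖ ^ 2) →
        Summable (fun n => (kk k₀ n) ^ 2 * ‖shellB k₀ a b u v n‖ ^ 2) ∧
        Real.sqrt (∑' n, (kk k₀ n) ^ 2 * ‖shellB k₀ a b u v n‖ ^ 2) ≤
          C * Real.sqrt (∑' n, (kk k₀ n) ^ 2 * ‖u n‖ ^ 2) *
            Real.sqrt (∑' n, (kk k₀ n) ^ 2 * ‖v n‖ ^ 2)) ∧
      (∀ u v : ℕ → ℂ, u 0 = 0 → v 0 = 0 →
        Summable (fun n => kk k₀ n * ‖u n‖ ^ 2) →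
        Summable (fun n => kk k₀ n * ‖v n‖ ^ 2) →
        Summable (fun n => ‖shellB k₀ a b u v n‖ ^ 2) ∧
        Real.sqrt (∑' n, ‖shellB k₀ a b u v n‖ ^ 2) ≤
          C * Real.sqrt (∑' n, kk k₀ n * ‖u n‖ ^ 2) *
            Real.sqrt (∑' n, kk k₀ n * ‖v n‖ ^ 2)) := by
  have hk : 0 < k₀ := lt_trans zero_lt_one hk₀
  refine ⟨24 * (|a| + |b| + 1), by positivity, ?_, ?_⟩
  · -- V estimate
    intro u v hu0 hv0 hu hv
    have hFsq : ∀ (w : ℕ → ℂ),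
        (fun n => (kk k₀ n * ‖w n‖) ^ 2) = (fun n => (kk k₀ n)^2 * ‖w n‖^2) :=
      fun w => funext fun n => mul_pow _ _ _
    set Su := Real.sqrt (∑' n, (kk k₀ n)^2 * ‖u n‖^2) with hSudef
    have hSu0 : 0 ≤ Su := Real.sqrt_nonneg _
    have husum : Summable (fun n => (kk k₀ n * ‖u n‖)^2) := by rw [hFsq]; exact hu
    have hvsum : Summable (fun n => (kk k₀ n * ‖v n‖)^2) := by rw [hFsq]; exact hv
    have hsup : ∀ m, kk k₀ m * ‖u m‖ ≤ Su := by
      intro m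
      have h := le_sqrt_tsum (f := fun n => kk k₀ n * ‖u n‖)
        (fun n => mul_nonneg (kk_pos hk n).le (norm_nonneg _)) husum m
      rwa [show (∑' n, (kk k₀ n * ‖u n‖)^2) = ∑' n, (kk k₀ n)^2 * ‖u n‖^2 from by
        rw [hFsq]] at h
    have hb := key (a := a) (b := b) hk (by norm_num : (0:ℝ) ≤ 4) hSu0 u v (kk k₀) (kk k₀) (kk k₀)
      (fun n => (kk_pos hk n).le) hsup (fun m => wV1 hk m) (fun m => wV2 hk m)
      (fun m => wV3 hk m) (fun m => wV4 hk m) (Or.inr trivial)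
      (fun n => (kk_pos hk n).le)
    have hcore := core (M := 4 * (|a| + |b| + 1) * Su) (by positivity)
      (F := fun n => kk k₀ n * ‖shellB k₀ a b u v n‖)
      (G := fun n => kk k₀ n * ‖v n‖)
      (fun n => mul_nonneg (kk_pos hk n).le (norm_nonneg _))
      (fun n => mul_nonneg (kk_pos hk n).le (norm_nonneg _))
      hvsum hb
    obtain ⟨hsum, hle⟩ := hcore
    constructor
    · rw [← hFsq (shellB k₀ a b u v)]; exact hsum
    · have e1 : (∑' n, (kk k₀ n * ‖shellB k₀ a b u v n‖)^2)
          = ∑' n, (kk k₀ n)^2 * ‖shellB k₀ a b u v n‖^2 := by rw [hFsq]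
      have e2 : (∑' n, (kk k₀ n * ‖v n‖)^2) = ∑' n, (kk k₀ n)^2 * ‖v n‖^2 := by rw [hFsq]
      rw [e1, e2] at hle
      calc Real.sqrt (∑' n, (kk k₀ n)^2 * ‖shellB k₀ a b u v n‖^2)
          ≤ 6 * (4 * (|a| + |b| + 1) * Su) *
            Real.sqrt (∑' n, (kk k₀ n)^2 * ‖v n‖^2) := hle
        _ = 24 * (|a| + |b| + 1) * Su * Real.sqrt (∑' n, (kk k₀ n)^2 * ‖v n‖^2) := by ring
  · -- H estimate
    intro u v hu0 hv0 hu hv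
    have hFsq : ∀ (w : ℕ → ℂ),
        (fun n => (Real.sqrt (kk k₀ n) * ‖w n‖) ^ 2) = (fun n => kk k₀ n * ‖w n‖^2) :=
      fun w => funext fun n => by
        rw [mul_pow, Real.sq_sqrt (kk_pos hk n).le]
    set Su := Real.sqrt (∑' n, kk k₀ n * ‖u n‖^2) with hSudef
    have hSu0 : 0 ≤ Su := Real.sqrt_nonneg _
    have husum : Summable (fun n => (Real.sqrt (kk k₀ n) * ‖u n‖)^2) := by
      rw [hFsq]; exact hu
    have hvsum : Summable (fun n => (Real.sqrt (kk k₀ n) * ‖v n‖)^2) := by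
      rw [hFsq]; exact hv
    have hsup : ∀ m, Real.sqrt (kk k₀ m) * ‖u m‖ ≤ Su := by
      intro m
      have h := le_sqrt_tsum (f := fun n => Real.sqrt (kk k₀ n) * ‖u n‖)
        (fun n => mul_nonneg (Real.sqrt_nonneg _) (norm_nonneg _)) husum m
      rwa [show (∑' n, (Real.sqrt (kk k₀ n) * ‖u n‖)^2) = ∑' n, kk k₀ n * ‖u n‖^2 from by
        rw [hFsq]] at h
    have hb := key (a := a) (b := b) hk (by norm_num : (0:ℝ) ≤ 4) hSu0 u v (fun _ => (1:ℝ))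
      (fun n => Real.sqrt (kk k₀ n)) (fun n => Real.sqrt (kk k₀ n))
      (fun n => Real.sqrt_nonneg _) hsup (fun m => wH1 hk m) (fun m => wH2 hk m)
      (fun m => wH3 hk m) (fun m => wH4 hk m) (Or.inr trivial)
      (fun n => by norm_num)
    have hb' : ∀ n, ‖shellB k₀ a b u v n‖ ≤ (4 * (|a| + |b| + 1) * Su) *
        ((Real.sqrt (kk k₀ (n+2)) * ‖v (n+2)‖) + (Real.sqrt (kk k₀ (n+1)) * ‖v (n+1)‖)
          + (Real.sqrt (kk k₀ (n-2)) * ‖v (n-2)‖)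
          + (Real.sqrt (kk k₀ (n-1)) * ‖v (n-1)‖)) := by
      intro n
      have := hb n
      simpa using this
    have hcore := core (M := 4 * (|a| + |b| + 1) * Su) (by positivity)
      (F := fun n => ‖shellB k₀ a b u v n‖)
      (G := fun n => Real.sqrt (kk k₀ n) * ‖v n‖)
      (fun n => norm_nonneg _)
      (fun n => mul_nonneg (Real.sqrt_nonneg _) (norm_nonneg _))
      hvsum hb'
    obtain ⟨hsum, hle⟩ := hcore
    refine ⟨hsum, ?_⟩
    have e2 : (∑' n, (Real.sqrt (kk k₀ n) * ‖v n‖)^2) = ∑' n, kk k₀ n * ‖v n‖^2 := by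
      rw [hFsq]
    rw [e2] at hle
    calc Real.sqrt (∑' n, ‖shellB k₀ a b u v n‖^2)
        ≤ 6 * (4 * (|a| + |b| + 1) * Su) *
          Real.sqrt (∑' n, kk k₀ n * ‖v n‖^2) := hle
      _ = 24 * (|a| + |b| + 1) * Su * Real.sqrt (∑' n, kk k₀ n * ‖v n‖^2) := by ring
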